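/- Let p > 1, R > 1, T > 0, and let a, b ∈ ℝ lie in one of the parameter regions of the definition of E₂(T) below. Define the weight w(|x|,t) := 1 if a > 0; (log(t+|x|+3R))⁻¹ if a = 0; (t+|x|+3R)^a if a < 0, the weighted norm ‖U‖₂ := sup_{(x,t)∈ℝ×[0,T]} w(|x|,t)|U(x,t)|, and L(V)(x,t) := (1/2)∫₀^t ∫_{x−t+s}^{x+t−s} V(y,s) ⟨s+⟨y⟩⟩^{−(1+a)} ⟨s−⟨y⟩⟩^{−(1+b)} dy ds. Define E₂(T) := 1 if a+b > 0 and a > 0; log^p(T+3R) if a = 0 and b > 0; log(T+3R) if a+b = 0 and a > 0; log^{p+1}(T+3R) if a = b = 0; (T+2R)^{−pa} if a < 0 and b > 0; (T+2R)^{−pa} log(T+3R) if a < 0 and b = 0; (T+2R)^{−(pa+b)} if a < 0 and b < 0; log^{p−1}(T+3R)(T+R)^{−b} if a = 0 and b < 0; (T+2R)^{−(a+b)} if a+b < 0 and a > 0. Then there exists C₃ = C₃(p,a,b,R) > 0 such that for every U ∈ C(ℝ×[0,T]) with supp U ⊂ {|x| ≤ t+R}, one has ‖L(|U|^p)‖₂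 ≤ C₃ ‖U‖₂^p E₂(T). -/

import Mathlib

open Real MeasureTheory Set
open scoped Classical

noncomputable section

/-- The Japanese bracket `⟨x⟩ = (1+x²)^{1/2}`. -/
def jap (x : ℝ) : ℝ := Real.sqrt (1 + x ^ 2)

/-- The characteristic weight `F(x,t) = ⟨t+⟨x⟩⟩^{-(1+a)} ⟨t-⟨x⟩⟩^{-(1+b)}`. -/
def cweight (a b x t : ℝ) : ℝ :=
  jap (t + jap x) ^ (-(1 + a)) * jap (t - jap x) ^ (-(1 + b))

/-- The Duhamel integral operator with the characteristic weight. -/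
def duhamel (a b : ℝ) (V : ℝ → ℝ → ℝ) (x t : ℝ) : ℝ :=
  (∫ s in (0:ℝ)..t, ∫ y in (x - t + s)..(x + t - s), V y s * cweight a b y s) / 2

/-- The weight `w(|x|,t)` of Section 4. -/
def wfun (a R x t : ℝ) : ℝ :=
  if 0 < a then 1
  else if a = 0 then (Real.log (t + |x| + 3 * R))⁻¹
  else (t + |x| + 3 * R) ^ a

/-- The quantity `E₂(T)` from Lemma 4.2. -/
def E2 (p a b R T : ℝ) : ℝ :=
  if 0 < a + b ∧ 0 < a then 1
  else if a = 0 ∧ 0 < b then Real.log (T + 3 * R) ^ p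
  else if a + b = 0 ∧ 0 < a then Real.log (T + 3 * R)
  else if a = 0 ∧ b = 0 then Real.log (T + 3 * R) ^ (p + 1)
  else if a < 0 ∧ 0 < b then (T + 2 * R) ^ (-(p * a))
  else if a < 0 ∧ b = 0 then (T + 2 * R) ^ (-(p * a)) * Real.log (T + 3 * R)
  else if a < 0 ∧ b < 0 then (T + 2 * R) ^ (-(p * a + b))
  else if a = 0 ∧ b < 0 then Real.log (T + 3 * R) ^ (p - 1) * (T + R) ^ (-b)
  else (T + 2 * R) ^ (-(a + b))

/-!
On the support `|y| ≤ s + R` of `U(·, s)` one has `⟨s + ⟨y⟩⟩ ≍ 1 + s`, `⟨s - ⟨y⟩⟩ ≍ 1 + |s - |y||`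
and `w(|y|, s)⁻¹ ≲ (1 + s)^{-min(a,0)} log(s + 3R)^{[a = 0]}`, while
`∫_{|y| ≤ s+R} (1 + |s - |y||)^{-(1+b)} dy ≲ (1 + s)^{-min(b,0)} log(s + 3R)^{[b = 0]}`.
So the inner integral of `L(|U|^p)` at time `s` is `≲ M^p (1 + s)^e log(s + 3R)^q`.
Integrating over `s ∈ [0, t]` gives a bounded, a logarithmic or a power-type quantity according as
`e < -1`, `e = -1` or `e > -1`, and multiplying by `w(|x|, t)` gives `E₂(T)` in every region of
parameters.
-/

lemma one_le_jap (x : ℝ) : 1 ≤ jap x :=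
  Real.one_le_sqrt.mpr (by nlinarith [sq_nonneg x])

lemma jap_pos (x : ℝ) : 0 < jap x := one_pos.trans_le (one_le_jap x)

lemma abs_le_jap (x : ℝ) : |x| ≤ jap x := by
  rw [jap, ← Real.sqrt_sq_eq_abs]
  exact Real.sqrt_le_sqrt (by linarith)

lemma jap_le_one_add_abs (x : ℝ) : jap x ≤ 1 + |x| :=
  (Real.sqrt_le_left (by positivity)).mpr (by nlinarith [sq_abs x, abs_nonneg x])

lemma rpow_le_of_le_mul_of_le_mul {u v K : ℝ} (c : ℝ) (hu : 0 < u) (hv : 0 < v) (hK : 1 ≤ K)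
    (huv : u ≤ K * v) (hvu : v ≤ K * u) : u ^ c ≤ K ^ |c| * v ^ c := by
  rcases le_or_gt 0 c with hc | hc
  · rw [abs_of_nonneg hc, ← Real.mul_rpow (by linarith) hv.le]
    exact Real.rpow_le_rpow hu.le huv hc
  · have hvK : v / K ≤ u := (div_le_iff₀ (by linarith)).2 (by linarith)
    calc u ^ c ≤ (v / K) ^ c := Real.rpow_le_rpow_of_nonpos (by positivity) hvK hc.le
      _ = K ^ |c| * v ^ c := by
        rw [abs_of_neg hc, Real.div_rpow hv.le (by linarith), Real.rpow_neg (by linarith)]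
        field_simp

lemma cweight_nonneg (a b y s : ℝ) : 0 ≤ cweight a b y s :=
  mul_nonneg (Real.rpow_nonneg (jap_pos _).le _) (Real.rpow_nonneg (jap_pos _).le _)

lemma cweight_le {a b R y s : ℝ} (hR : 0 ≤ R) (hs : 0 ≤ s) (hy : |y| ≤ s + R) :
    cweight a b y s ≤ (R + 2) ^ |1 + a| * 3 ^ |1 + b| *
      ((1 + s) ^ (-(1 + a)) * (1 + |(s - |y|)|) ^ (-(1 + b))) := by
  have hy1 := one_le_jap y
  have hy2 := abs_le_jap y
  have hy3 := jap_le_one_add_abs y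
  have hplus : jap (s + jap y) ^ (-(1 + a)) ≤ (R + 2) ^ |1 + a| * (1 + s) ^ (-(1 + a)) := by
    have h1 := jap_le_one_add_abs (s + jap y)
    have h2 := abs_le_jap (s + jap y)
    rw [abs_of_nonneg (by linarith)] at h1 h2
    have := rpow_le_of_le_mul_of_le_mul (u := jap (s + jap y)) (v := 1 + s) (K := R + 2)
      (-(1 + a)) (jap_pos _) (by linarith) (by linarith) (by nlinarith) (by nlinarith)
    rwa [abs_neg] at this
  have hminus : jap (s - jap y) ^ (-(1 + b)) ≤ 3 ^ |1 + b| * (1 + |(s - |y|)|) ^ (-(1 + b)) := by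
    have h1 := jap_le_one_add_abs (s - jap y)
    have h2 := abs_le_jap (s - jap y)
    have h3 := one_le_jap (s - jap y)
    have hdiff : |s - jap y - (s - |y|)| ≤ 1 := by
      rw [abs_le]
      constructor <;> linarith
    have hle := abs_sub_abs_le_abs_sub (s - jap y) (s - |y|)
    have hge := abs_sub_abs_le_abs_sub (s - |y|) (s - jap y)
    rw [abs_sub_comm (s - |y|)] at hge
    have := rpow_le_of_le_mul_of_le_mul (u := jap (s - jap y)) (v := 1 + |(s - |y|)|) (K := 3)
      (-(1 + b)) (jap_pos _) (by positivity) (by norm_num)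
      (by linarith [abs_nonneg (s - |y|)]) (by linarith)
    rwa [abs_neg] at this
  calc cweight a b y s
      ≤ ((R + 2) ^ |1 + a| * (1 + s) ^ (-(1 + a))) *
          (3 ^ |1 + b| * (1 + |(s - |y|)|) ^ (-(1 + b))) :=
        mul_le_mul hplus hminus (Real.rpow_nonneg (jap_pos _).le _) (by positivity)
    _ = _ := by ring

def powLog (R e q s : ℝ) : ℝ := (1 + s) ^ e * log (s + 3 * R) ^ q

section PowLog

variable {R e q s t : ℝ}

lemma one_lt_log_add_three_mul (hR : 1 < R) (hs : 0 ≤ s) : 1 < log (s + 3 * R) := by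
  rw [Real.lt_log_iff_exp_lt (by linarith)]
  linarith [Real.exp_one_lt_d9]

lemma powLog_nonneg (hR : 1 < R) (hs : 0 ≤ s) : 0 ≤ powLog R e q s :=
  mul_nonneg (Real.rpow_nonneg (by linarith) _)
    (Real.rpow_nonneg (zero_le_one.trans (one_lt_log_add_three_mul hR hs).le) _)

lemma one_le_powLog (hR : 1 < R) (hs : 0 ≤ s) (he : 0 ≤ e) (hq : 0 ≤ q) :
    1 ≤ powLog R e q s :=
  one_le_mul_of_one_le_of_one_le (Real.one_le_rpow (by linarith) he)
    (Real.one_le_rpow (one_lt_log_add_three_mul hR hs).le hq)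

lemma powLog_mul_powLog (hR : 1 < R) (hs : 0 ≤ s) (e' q' : ℝ) :
    powLog R e q s * powLog R e' q' s = powLog R (e + e') (q + q') s := by
  have hlog := one_lt_log_add_three_mul hR hs
  simp only [powLog, Real.rpow_add (by linarith : 0 < 1 + s),
    Real.rpow_add (by linarith : 0 < log (s + 3 * R))]
  ring

lemma powLog_rpow (hR : 1 < R) (hs : 0 ≤ s) (p : ℝ) :
    powLog R e q s ^ p = powLog R (e * p) (q * p) s := by
  have hlog := one_lt_log_add_three_mul hR hs
  rw [powLog, powLog, Real.mul_rpow (by positivity) (by positivity),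
    ← Real.rpow_mul (by linarith), ← Real.rpow_mul (by linarith)]

lemma powLog_le_of_le (hR : 1 < R) (hs : 0 ≤ s) (hst : s ≤ t) (he : 0 ≤ e) (hq : 0 ≤ q)
    {X : ℝ} (hX : 1 + t ≤ X) : powLog R e q s ≤ X ^ e * log (t + 3 * R) ^ q := by
  have hlog := one_lt_log_add_three_mul hR hs
  exact mul_le_mul (Real.rpow_le_rpow (by linarith) (by linarith) he)
    (Real.rpow_le_rpow (by linarith) (Real.log_le_log (by linarith) (by linarith)) hq)
    (Real.rpow_nonneg (by linarith) _) (Real.rpow_nonneg (by linarith) _)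

lemma continuousOn_powLog (hR : 1 < R) : ContinuousOn (powLog R e q) (Ici 0) := by
  refine ContinuousOn.mul ?_ ?_
  · exact (continuous_const_add 1).continuousOn.rpow_const
      fun s hs => Or.inl (by linarith [mem_Ici.1 hs])
  · refine (ContinuousOn.log (by fun_prop) fun s hs => ?_).rpow_const fun s hs => Or.inl ?_
    · linarith [mem_Ici.1 hs]
    · linarith [one_lt_log_add_three_mul hR (mem_Ici.1 hs)]

lemma intervalIntegrable_powLog (hR : 1 < R) (ht : 0 ≤ t) :
    IntervalIntegrable (powLog R e q) volume 0 t :=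
  ContinuousOn.intervalIntegrable_of_Icc ht ((continuousOn_powLog hR).mono Icc_subset_Ici_self)

lemma intervalIntegrable_one_add_rpow (ht : 0 ≤ t) :
    IntervalIntegrable (fun s => (1 + s) ^ e) volume 0 t :=
  ContinuousOn.intervalIntegrable_of_Icc ht ((continuous_const_add 1).continuousOn.rpow_const
    fun s hs => Or.inl (by linarith [hs.1]))

lemma integral_one_add_rpow (ht : 0 ≤ t) (he : e ≠ -1) :
    ∫ s in (0 : ℝ)..t, (1 + s) ^ e = ((1 + t) ^ (e + 1) - 1) / (e + 1) := by
  rw [intervalIntegral.integral_comp_add_left (fun u => u ^ e),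
    integral_rpow (Or.inr ⟨he, fun h => ?_⟩)]
  · simp
  · rw [add_zero, uIcc_of_le (by linarith)] at h
    linarith [h.1]

lemma integral_one_add_rpow_neg_one (ht : 0 ≤ t) :
    ∫ s in (0 : ℝ)..t, (1 + s) ^ (-1 : ℝ) = log (1 + t) := by
  simp only [Real.rpow_neg_one]
  rw [intervalIntegral.integral_comp_add_left (fun u => u⁻¹),
    integral_inv_of_pos (by norm_num) (by linarith)]
  simp

lemma integral_powLog_le_log_rpow_mul (hR : 1 < R) (hq : 0 ≤ q) (ht : 0 ≤ t) :
    ∫ s in (0 : ℝ)..t, powLog R e q s ≤ log (t + 3 * R) ^ q * ∫ s in (0 : ℝ)..t, (1 + s) ^ e := by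
  rw [← intervalIntegral.integral_const_mul]
  refine intervalIntegral.integral_mono_on ht (intervalIntegrable_powLog hR ht)
    ((intervalIntegrable_one_add_rpow ht).const_mul _) fun s hs => ?_
  obtain ⟨hs0, hst⟩ := hs
  have hlog := one_lt_log_add_three_mul hR hs0
  rw [powLog, mul_comm]
  exact mul_le_mul_of_nonneg_right (Real.rpow_le_rpow (by linarith)
    (Real.log_le_log (by linarith) (by linarith)) hq) (Real.rpow_nonneg (by linarith) _)

lemma integral_powLog_neg_one_le (hR : 1 < R) (hq : 0 ≤ q) (ht : 0 ≤ t) :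
    ∫ s in (0 : ℝ)..t, powLog R (-1) q s ≤ powLog R 0 (q + 1) t := by
  have hlog := one_lt_log_add_three_mul hR ht
  calc ∫ s in (0 : ℝ)..t, powLog R (-1) q s
      ≤ log (t + 3 * R) ^ q * log (1 + t) := by
        rw [← integral_one_add_rpow_neg_one ht]
        exact integral_powLog_le_log_rpow_mul hR hq ht
    _ ≤ log (t + 3 * R) ^ q * log (t + 3 * R) :=
        mul_le_mul_of_nonneg_left (Real.log_le_log (by linarith) (by linarith))
          (Real.rpow_nonneg (by linarith) _)
    _ = powLog R 0 (q + 1) t := by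
        rw [powLog, Real.rpow_zero, one_mul, Real.rpow_add_one (by linarith)]

lemma integral_powLog_le_of_neg_one_lt (hR : 1 < R) (hq : 0 ≤ q) (ht : 0 ≤ t) (he : -1 < e) :
    ∫ s in (0 : ℝ)..t, powLog R e q s ≤ (e + 1)⁻¹ * powLog R (e + 1) q t := by
  have hlog := one_lt_log_add_three_mul hR ht
  calc ∫ s in (0 : ℝ)..t, powLog R e q s
      ≤ log (t + 3 * R) ^ q * (((1 + t) ^ (e + 1) - 1) / (e + 1)) := by
        rw [← integral_one_add_rpow ht he.ne']
        exact integral_powLog_le_log_rpow_mul hR hq ht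
    _ ≤ log (t + 3 * R) ^ q * ((1 + t) ^ (e + 1) / (e + 1)) := by
        have : 0 ≤ log (t + 3 * R) ^ q := Real.rpow_nonneg (by linarith) _
        have : 0 < e + 1 := by linarith
        gcongr
        linarith
    _ = (e + 1)⁻¹ * powLog R (e + 1) q t := by
        rw [powLog]
        ring

lemma log_add_three_mul_le (hR : 1 < R) (hs : 0 ≤ s) {ε : ℝ} (hε : 0 < ε) :
    log (s + 3 * R) ≤ (3 * R) ^ ε / ε * (1 + s) ^ ε :=
  calc log (s + 3 * R) ≤ (s + 3 * R) ^ ε / ε := Real.log_le_rpow_div (by linarith) hε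
    _ ≤ (3 * R * (1 + s)) ^ ε / ε := by gcongr; nlinarith
    _ = (3 * R) ^ ε / ε * (1 + s) ^ ε := by
        rw [Real.mul_rpow (by linarith) (by linarith)]
        ring

lemma exists_integral_powLog_le_of_lt_neg_one (hR : 1 < R) (hq : 0 ≤ q) (he : e < -1) :
    ∃ C, ∀ t, 0 ≤ t → ∫ s in (0 : ℝ)..t, powLog R e q s ≤ C := by
  -- `log (s + 3R) ≲ (1 + s)^ε` with `ε q` at most half the spare decay `-1 - e`
  set ε := (-1 - e) / (2 * (q + 1))
  have hε : 0 < ε := div_pos (by linarith) (by linarith)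
  have hεq : ε * q ≤ (-1 - e) / 2 := by
    rw [div_mul_eq_mul_div, div_le_div_iff₀ (by linarith) (by norm_num)]
    nlinarith
  set K := (3 * R) ^ ε / ε
  have hK : 0 ≤ K := by positivity
  set e' := e + ε * q
  have he' : e' + 1 < 0 := by linarith
  refine ⟨K ^ q * (-(e' + 1))⁻¹, fun t ht => ?_⟩
  have hpoint : ∀ s ∈ Icc 0 t, powLog R e q s ≤ K ^ q * (1 + s) ^ e' := fun s hs => by
    have h1s : 0 < 1 + s := by linarith [hs.1]
    have hlog := one_lt_log_add_three_mul hR hs.1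
    calc powLog R e q s ≤ (1 + s) ^ e * (K * (1 + s) ^ ε) ^ q :=
          mul_le_mul_of_nonneg_left (Real.rpow_le_rpow (by linarith)
            (log_add_three_mul_le hR hs.1 hε) hq) (Real.rpow_nonneg h1s.le _)
      _ = K ^ q * (1 + s) ^ e' := by
          rw [Real.mul_rpow hK (Real.rpow_nonneg h1s.le _), ← Real.rpow_mul h1s.le,
            Real.rpow_add h1s]
          ring
  have hX : 0 ≤ (1 + t) ^ (e' + 1) := Real.rpow_nonneg (by linarith) _
  calc ∫ s in (0 : ℝ)..t, powLog R e q s ≤ ∫ s in (0 : ℝ)..t, K ^ q * (1 + s) ^ e' :=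
        intervalIntegral.integral_mono_on ht (intervalIntegrable_powLog hR ht)
          ((intervalIntegrable_one_add_rpow ht).const_mul _) hpoint
    _ = K ^ q * ((1 - (1 + t) ^ (e' + 1)) * (-(e' + 1))⁻¹) := by
        rw [intervalIntegral.integral_const_mul, integral_one_add_rpow ht (by linarith)]
        field_simp
        ring
    _ ≤ K ^ q * (-(e' + 1))⁻¹ := by
        have : 0 < (-(e' + 1))⁻¹ := inv_pos.2 (by linarith)
        gcongr
        nlinarith

lemma integral_powLog_nonneg (hR : 1 < R) (ht : 0 ≤ t) : 0 ≤ ∫ s in (0 : ℝ)..t, powLog R e q s :=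
  intervalIntegral.integral_nonneg ht fun _ hs => powLog_nonneg hR hs.1

end PowLog

section Weight

variable {a R x t : ℝ}

lemma wfun_pos (hR : 1 < R) (ht : 0 ≤ t) : 0 < wfun a R x t := by
  have hlog := one_lt_log_add_three_mul hR (add_nonneg ht (abs_nonneg x))
  unfold wfun
  split_ifs
  · exact one_pos
  · exact inv_pos.2 (by linarith)
  · exact Real.rpow_pos_of_pos (by positivity) _

lemma wfun_le_of_pos (ha : 0 < a) : wfun a R x t ≤ powLog R 0 0 t := by
  simp [wfun, ha, powLog]

lemma wfun_zero_le (hR : 1 < R) (ht : 0 ≤ t) : wfun 0 R x t ≤ powLog R 0 (-1) t := by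
  have hlog := one_lt_log_add_three_mul hR ht
  rw [wfun, if_neg (lt_irrefl 0), if_pos rfl, powLog, Real.rpow_zero, one_mul, Real.rpow_neg_one]
  exact inv_anti₀ (by linarith) (Real.log_le_log (by linarith) (by linarith [abs_nonneg x]))

lemma wfun_le_of_neg (ha : a < 0) (hR : 1 < R) (ht : 0 ≤ t) : wfun a R x t ≤ powLog R a 0 t := by
  rw [wfun, if_neg ha.not_gt, if_neg ha.ne, powLog, Real.rpow_zero, mul_one]
  exact Real.rpow_le_rpow_of_nonpos (by linarith) (by linarith [abs_nonneg x]) ha.le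

lemma exists_inv_wfun_le (a : ℝ) (hR : 1 < R) : ∃ C > 0, ∀ y s, 0 ≤ s → |y| ≤ s + R →
    (wfun a R y s)⁻¹ ≤ C * powLog R (-min a 0) (if a = 0 then 1 else 0) s := by
  rcases lt_trichotomy a 0 with ha | rfl | ha
  · refine ⟨(4 * R) ^ (-a), by positivity, fun y s hs hy => ?_⟩
    have hpos : 0 < s + |y| + 3 * R := by positivity
    rw [wfun, if_neg ha.not_gt, if_neg ha.ne, ← Real.rpow_neg hpos.le, min_eq_left ha.le,
      if_neg ha.ne, powLog, Real.rpow_zero, mul_one, ← Real.mul_rpow (by positivity) (by linarith)]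
    exact Real.rpow_le_rpow hpos.le (by nlinarith) (by linarith)
  · refine ⟨2, two_pos, fun y s hs hy => ?_⟩
    have hlog := one_lt_log_add_three_mul hR hs
    rw [wfun, if_neg (lt_irrefl 0), if_pos rfl, inv_inv, min_self, neg_zero, if_pos rfl, powLog,
      Real.rpow_zero, one_mul, Real.rpow_one]
    calc log (s + |y| + 3 * R) ≤ log ((s + 3 * R) ^ 2) :=
          Real.log_le_log (by positivity) (by nlinarith)
      _ = 2 * log (s + 3 * R) := by
          rw [Real.log_pow]
          norm_num
  · refine ⟨1, one_pos, fun y s hs hy => ?_⟩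
    simp [wfun, ha, ha.ne', min_eq_right ha.le, powLog]

end Weight

lemma integral_comp_abs_symm {f : ℝ → ℝ} (hf : Continuous f) {m : ℝ} (hm : 0 ≤ m) :
    ∫ y in -m..m, f |y| = 2 * ∫ y in (0 : ℝ)..m, f y := by
  have hint : ∀ u v : ℝ, IntervalIntegrable (fun y => f |y|) volume u v :=
    fun u v => (hf.comp continuous_abs).intervalIntegrable u v
  have hpos : ∫ y in (0 : ℝ)..m, f |y| = ∫ y in (0 : ℝ)..m, f y :=
    intervalIntegral.integral_congr fun y hy => by
      rw [uIcc_of_le hm] at hy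
      simp only [abs_of_nonneg hy.1]
  have hneg : ∫ y in -m..0, f |y| = ∫ y in (0 : ℝ)..m, f |y| := by
    simpa using (intervalIntegral.integral_comp_neg (a := 0) (b := m) fun y => f |y|).symm
  rw [← intervalIntegral.integral_add_adjacent_intervals (hint (-m) 0) (hint 0 m), hneg, hpos]
  ring

lemma integral_one_add_abs_sub_abs_rpow_eq (b : ℝ) {R s : ℝ} (hR : 0 ≤ R) (hs : 0 ≤ s) :
    ∫ y in -(s + R)..(s + R), (1 + |(s - |y|)|) ^ (-(1 + b)) =
      2 * ((∫ v in -R..0, (1 + |v|) ^ (-(1 + b))) + ∫ v in (0 : ℝ)..s, (1 + v) ^ (-(1 + b))) := by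
  have hg : Continuous fun v : ℝ => (1 + |v|) ^ (-(1 + b)) :=
    Continuous.rpow_const (f := fun v => 1 + |v|) (by fun_prop) fun v => Or.inl (by positivity)
  have hpos : ∫ v in (0 : ℝ)..s, (1 + |v|) ^ (-(1 + b)) = ∫ v in (0 : ℝ)..s, (1 + v) ^ (-(1 + b)) :=
    intervalIntegral.integral_congr fun v hv => by
      rw [uIcc_of_le hs] at hv
      simp only [abs_of_nonneg hv.1]
  -- `v = s - |y|` maps each half of `[-(s + R), s + R]` onto `[-R, s]`
  rw [integral_comp_abs_symm (f := fun z => (1 + |(s - z)|) ^ (-(1 + b)))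
      (hg.comp (continuous_const.sub continuous_id)) (by linarith),
    intervalIntegral.integral_comp_sub_left (fun v => (1 + |v|) ^ (-(1 + b))) s,
    sub_zero, show s - (s + R) = -R by ring,
    ← intervalIntegral.integral_add_adjacent_intervals (hg.intervalIntegrable _ 0)
      (hg.intervalIntegrable 0 _), hpos]

lemma exists_integral_one_add_rpow_le (b : ℝ) {R : ℝ} (hR : 1 < R) :
    ∃ C ≥ 0, ∀ s, 0 ≤ s → ∫ v in (0 : ℝ)..s, (1 + v) ^ (-(1 + b)) ≤
      C * powLog R (-min b 0) (if b = 0 then 1 else 0) s := by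
  have hpowLog : ∀ s, ∫ v in (0 : ℝ)..s, (1 + v) ^ (-(1 + b)) =
      ∫ v in (0 : ℝ)..s, powLog R (-(1 + b)) 0 v := fun s => by
    simp only [powLog, Real.rpow_zero, mul_one]
  simp only [hpowLog]
  rcases lt_trichotomy b 0 with hb | rfl | hb
  · refine ⟨(-b)⁻¹, by simp [hb.le], fun s hs => ?_⟩
    simpa [min_eq_left hb.le, hb.ne] using
      integral_powLog_le_of_neg_one_lt hR le_rfl hs (by linarith : -1 < -(1 + b))
  · refine ⟨1, zero_le_one, fun s hs => ?_⟩
    simpa using integral_powLog_neg_one_le (q := 0) hR le_rfl hs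
  · obtain ⟨C, hC⟩ := exists_integral_powLog_le_of_lt_neg_one (q := 0) hR le_rfl
      (by linarith : -(1 + b) < -1)
    refine ⟨max C 0, le_max_right _ _, fun s hs => ?_⟩
    simpa [min_eq_right hb.le, hb.ne', powLog] using (hC s hs).trans (le_max_left _ _)

lemma exists_integral_one_add_abs_sub_abs_rpow_le (b : ℝ) {R : ℝ} (hR : 1 < R) :
    ∃ C > 0, ∀ s, 0 ≤ s → ∫ y in -(s + R)..(s + R), (1 + |(s - |y|)|) ^ (-(1 + b)) ≤
      C * powLog R (-min b 0) (if b = 0 then 1 else 0) s := by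
  set A := ∫ v in -R..0, (1 + |v|) ^ (-(1 + b))
  have hA : 0 ≤ A := intervalIntegral.integral_nonneg (by linarith) fun v _ => by positivity
  obtain ⟨C, hC, hint⟩ := exists_integral_one_add_rpow_le b hR
  refine ⟨2 * (A + C + 1), by positivity, fun s hs => ?_⟩
  have hP : 1 ≤ powLog R (-min b 0) (if b = 0 then 1 else 0) s :=
    one_le_powLog hR hs (by simp) (by split_ifs <;> norm_num)
  rw [integral_one_add_abs_sub_abs_rpow_eq b (by linarith) hs]
  nlinarith [hint s hs]

lemma intervalIntegral_le_of_le_of_abs_le {f g : ℝ → ℝ} {α β m : ℝ} (hαβ : α ≤ β) (hm : 0 ≤ m)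
    (hf0 : ∀ y, 0 ≤ f y) (hfm : ∀ y, m < |y| → f y = 0) (hfg : ∀ y, |y| ≤ m → f y ≤ g y)
    (hg : IntervalIntegrable g volume (-m) m) :
    ∫ y in α..β, f y ≤ ∫ y in -m..m, g y := by
  have hfG : ∀ y, f y ≤ (Icc (-m) m).indicator g y := fun y => by
    by_cases hy : |y| ≤ m
    · rw [indicator_of_mem (mem_Icc.2 (abs_le.1 hy))]
      exact hfg y hy
    · rw [hfm y (not_le.1 hy), indicator_of_notMem (fun h => hy (abs_le.2 (mem_Icc.1 h)))]
  have hGi : Integrable ((Icc (-m) m).indicator g) :=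
    ((intervalIntegrable_iff_integrableOn_Icc_of_le (by linarith)).1 hg).integrable_indicator
      measurableSet_Icc
  calc ∫ y in α..β, f y = ∫ y in Ioc α β, f y := intervalIntegral.integral_of_le hαβ
    _ ≤ ∫ y in Ioc α β, (Icc (-m) m).indicator g y :=
        integral_mono_of_nonneg (ae_of_all _ hf0) hGi.integrableOn (ae_of_all _ hfG)
    _ ≤ ∫ y, (Icc (-m) m).indicator g y :=
        setIntegral_le_integral hGi (ae_of_all _ fun y => (hf0 y).trans (hfG y))
    _ = ∫ y in -m..m, g y := by
        rw [integral_indicator measurableSet_Icc, intervalIntegral.integral_of_le (by linarith),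
          integral_Icc_eq_integral_Ioc]

section Duhamel

variable {p a b R : ℝ}

lemma exists_rpow_abs_le_of_wfun_mul_le (hp : 0 ≤ p) (hR : 1 < R) :
    ∃ C > 0, ∀ u y s M : ℝ, 0 ≤ s → |y| ≤ s + R → wfun a R y s * |u| ≤ M →
      |u| ^ p ≤ C * M ^ p * powLog R (-min a 0 * p) ((if a = 0 then 1 else 0) * p) s := by
  obtain ⟨C, hC, hinv⟩ := exists_inv_wfun_le a hR
  refine ⟨C ^ p, by positivity, fun u y s M hs hy hM => ?_⟩
  have hw := wfun_pos (a := a) (x := y) hR hs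
  have hM0 : 0 ≤ M := (mul_nonneg hw.le (abs_nonneg u)).trans hM
  have hu : |u| ≤ M * (C * powLog R (-min a 0) (if a = 0 then 1 else 0) s) :=
    calc |u| ≤ M * (wfun a R y s)⁻¹ := by rw [← div_eq_mul_inv, le_div_iff₀ hw, mul_comm]; exact hM
      _ ≤ _ := mul_le_mul_of_nonneg_left (hinv y s hs hy) hM0
  calc |u| ^ p ≤ (M * (C * powLog R (-min a 0) (if a = 0 then 1 else 0) s)) ^ p :=
        Real.rpow_le_rpow (abs_nonneg u) hu hp
    _ = C ^ p * M ^ p * powLog R (-min a 0 * p) ((if a = 0 then 1 else 0) * p) s := by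
        rw [Real.mul_rpow hM0 (mul_nonneg hC.le (powLog_nonneg hR hs)),
          Real.mul_rpow hC.le (powLog_nonneg hR hs), powLog_rpow hR hs]
        ring

lemma exists_rpow_abs_mul_cweight_le (hp : 0 ≤ p) (hR : 1 < R) :
    ∃ C > 0, ∀ u y s M : ℝ, 0 ≤ s → |y| ≤ s + R → wfun a R y s * |u| ≤ M →
      |u| ^ p * cweight a b y s ≤ C * M ^ p *
        powLog R (-min a 0 * p - (1 + a)) ((if a = 0 then 1 else 0) * p) s *
          (1 + |(s - |y|)|) ^ (-(1 + b)) := by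
  obtain ⟨C, hC, hU⟩ := exists_rpow_abs_le_of_wfun_mul_le (a := a) hp hR
  refine ⟨C * ((R + 2) ^ |1 + a| * 3 ^ |1 + b|), by positivity, fun u y s M hs hy hM => ?_⟩
  have hM0 : 0 ≤ M := (mul_nonneg (wfun_pos hR hs).le (abs_nonneg _)).trans hM
  calc |u| ^ p * cweight a b y s
      ≤ (C * M ^ p * powLog R (-min a 0 * p) ((if a = 0 then 1 else 0) * p) s) *
          ((R + 2) ^ |1 + a| * 3 ^ |1 + b| *
            ((1 + s) ^ (-(1 + a)) * (1 + |(s - |y|)|) ^ (-(1 + b)))) :=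
        mul_le_mul (hU u y s M hs hy hM) (cweight_le (by linarith) hs hy)
          (cweight_nonneg _ _ _ _) (mul_nonneg (by positivity) (powLog_nonneg hR hs))
    _ = _ := by
        simp only [powLog, sub_eq_add_neg _ (1 + a), Real.rpow_add (by linarith : 0 < 1 + s)]
        ring

/-- The three terms come from `|U|^p ≲ M^p w(|y|,s)^{-p}`, from `⟨s + ⟨y⟩⟩^{-(1+a)}` and from
integrating `⟨s - ⟨y⟩⟩^{-(1+b)}` over `|y| ≤ s + R`; likewise the two terms of `duhamelLogExp`. -/
def duhamelExp (p a b : ℝ) : ℝ := -min a 0 * p - (1 + a) - min b 0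

def duhamelLogExp (p a b : ℝ) : ℝ := (if a = 0 then 1 else 0) * p + (if b = 0 then 1 else 0)

lemma duhamelLogExp_nonneg (hp : 0 ≤ p) : 0 ≤ duhamelLogExp p a b := by
  unfold duhamelLogExp
  split_ifs <;> linarith

lemma exists_integral_rpow_abs_mul_cweight_le (hp : 1 < p) (hR : 1 < R) :
    ∃ C > 0, ∀ (u : ℝ → ℝ) (s M α β : ℝ), 0 ≤ s → α ≤ β →
      (∀ y, s + R < |y| → u y = 0) → (∀ y, wfun a R y s * |u y| ≤ M) →
      ∫ y in α..β, |u y| ^ p * cweight a b y s ≤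
        C * M ^ p * powLog R (duhamelExp p a b) (duhamelLogExp p a b) s := by
  obtain ⟨CF, hCF, hF⟩ := exists_rpow_abs_mul_cweight_le (p := p) (a := a) (b := b) (by linarith) hR
  obtain ⟨CQ, hCQ, hQ⟩ := exists_integral_one_add_abs_sub_abs_rpow_le b hR
  refine ⟨CF * CQ, by positivity, fun u s M α β hs hαβ hsupp hM => ?_⟩
  have hM0 : 0 ≤ M := (mul_nonneg (wfun_pos hR hs).le (abs_nonneg _)).trans (hM 0)
  set P := powLog R (-min a 0 * p - (1 + a)) ((if a = 0 then 1 else 0) * p) s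
  have hP : 0 ≤ CF * M ^ p * P := mul_nonneg (by positivity) (powLog_nonneg hR hs)
  have hQc : Continuous fun y : ℝ => (1 + |(s - |y|)|) ^ (-(1 + b)) :=
    Continuous.rpow_const (by fun_prop) fun v => Or.inl (by positivity)
  calc ∫ y in α..β, |u y| ^ p * cweight a b y s
      ≤ ∫ y in -(s + R)..(s + R), CF * M ^ p * P * (1 + |(s - |y|)|) ^ (-(1 + b)) :=
        intervalIntegral_le_of_le_of_abs_le hαβ (by linarith)
          (fun y => mul_nonneg (by positivity) (cweight_nonneg _ _ _ _))
          (fun y hy => by simp [hsupp y hy, Real.zero_rpow (by linarith : p ≠ 0)])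
          (fun y hy => hF (u y) y s M hs hy (hM y)) ((hQc.const_mul _).intervalIntegrable _ _)
    _ = CF * M ^ p * P * ∫ y in -(s + R)..(s + R), (1 + |(s - |y|)|) ^ (-(1 + b)) :=
        intervalIntegral.integral_const_mul _ _
    _ ≤ CF * M ^ p * P * (CQ * powLog R (-min b 0) (if b = 0 then 1 else 0) s) :=
        mul_le_mul_of_nonneg_left (hQ s hs) hP
    _ = CF * CQ * M ^ p * (P * powLog R (-min b 0) (if b = 0 then 1 else 0) s) := by ring
    _ = CF * CQ * M ^ p * powLog R (duhamelExp p a b) (duhamelLogExp p a b) s := by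
        rw [powLog_mul_powLog hR hs, duhamelExp, duhamelLogExp, ← sub_eq_add_neg]

lemma exists_abs_duhamel_le (hp : 1 < p) (hR : 1 < R) :
    ∃ C > 0, ∀ (U : ℝ → ℝ → ℝ) (M x t : ℝ), 0 ≤ t →
      (∀ y s, 0 ≤ s → s ≤ t → s + R < |y| → U y s = 0) →
      (∀ y s, 0 ≤ s → s ≤ t → wfun a R y s * |U y s| ≤ M) →
      |duhamel a b (fun y s => |U y s| ^ p) x t| ≤
        C * M ^ p * ∫ s in (0 : ℝ)..t, powLog R (duhamelExp p a b) (duhamelLogExp p a b) s := by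
  obtain ⟨C, hC, hinner⟩ := exists_integral_rpow_abs_mul_cweight_le (a := a) (b := b) hp hR
  refine ⟨C / 2, by positivity, fun U M x t ht hsupp hM => ?_⟩
  set I := fun s => ∫ y in (x - t + s)..(x + t - s), |U y s| ^ p * cweight a b y s
  have hI0 : ∀ s ∈ Icc 0 t, 0 ≤ I s := fun s hs =>
    intervalIntegral.integral_nonneg (by linarith [hs.2])
      fun y _ => mul_nonneg (by positivity) (cweight_nonneg _ _ _ _)
  have hI : ∀ s ∈ Icc 0 t,
      I s ≤ C * M ^ p * powLog R (duhamelExp p a b) (duhamelLogExp p a b) s := fun s hs =>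
    hinner (U · s) s M _ _ hs.1 (by linarith [hs.2]) (fun y => hsupp y s hs.1 hs.2)
      (fun y => hM y s hs.1 hs.2)
  have hint : ∫ s in (0 : ℝ)..t, I s ≤
      ∫ s in (0 : ℝ)..t, C * M ^ p * powLog R (duhamelExp p a b) (duhamelLogExp p a b) s := by
    simp only [intervalIntegral.integral_of_le ht]
    exact integral_mono_of_nonneg
      (ae_restrict_of_forall_mem measurableSet_Ioc fun s hs => hI0 s (Ioc_subset_Icc_self hs))
      ((intervalIntegrable_powLog hR ht).1.const_mul _)
      (ae_restrict_of_forall_mem measurableSet_Ioc fun s hs => hI s (Ioc_subset_Icc_self hs))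
  have hL : duhamel a b (fun y s => |U y s| ^ p) x t = (∫ s in (0 : ℝ)..t, I s) / 2 := rfl
  rw [hL, abs_of_nonneg (div_nonneg (intervalIntegral.integral_nonneg ht hI0) zero_le_two)]
  calc (∫ s in (0 : ℝ)..t, I s) / 2
      ≤ (∫ s in (0 : ℝ)..t, C * M ^ p * powLog R (duhamelExp p a b) (duhamelLogExp p a b) s) / 2 :=
        div_le_div_of_nonneg_right hint zero_le_two
    _ = _ := by
        rw [intervalIntegral.integral_const_mul]
        ring

end Duhamel

section TimeIntegral

variable {a R x t T u v e q X : ℝ}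

lemma wfun_mul_integral_powLog_le_of_neg_one_lt (hR : 1 < R) (ht : 0 ≤ t) (htT : t ≤ T)
    (hX : 1 + T ≤ X) (he : -1 < e) (hq : 0 ≤ q) (hw : wfun a R x t ≤ powLog R u v t)
    (hu : 0 ≤ u + (e + 1)) (hv : 0 ≤ v + q) :
    wfun a R x t * ∫ s in (0 : ℝ)..t, powLog R e q s ≤
      (e + 1)⁻¹ * (X ^ (u + (e + 1)) * log (T + 3 * R) ^ (v + q)) :=
  calc _ ≤ powLog R u v t * ((e + 1)⁻¹ * powLog R (e + 1) q t) :=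
        mul_le_mul hw (integral_powLog_le_of_neg_one_lt hR hq ht he)
          (integral_powLog_nonneg hR ht) (powLog_nonneg hR ht)
    _ = (e + 1)⁻¹ * powLog R (u + (e + 1)) (v + q) t := by
        rw [← powLog_mul_powLog hR ht]
        ring
    _ ≤ _ := mul_le_mul_of_nonneg_left (powLog_le_of_le hR ht htT hu hv (by linarith))
        (inv_nonneg.2 (by linarith))

lemma wfun_mul_integral_powLog_neg_one_le (hR : 1 < R) (ht : 0 ≤ t) (htT : t ≤ T)
    (hX : 1 + T ≤ X) (hq : 0 ≤ q) (hw : wfun a R x t ≤ powLog R u v t)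
    (hu : 0 ≤ u) (hv : 0 ≤ v + (q + 1)) :
    wfun a R x t * ∫ s in (0 : ℝ)..t, powLog R (-1) q s ≤
      X ^ u * log (T + 3 * R) ^ (v + (q + 1)) :=
  calc _ ≤ powLog R u v t * powLog R 0 (q + 1) t :=
        mul_le_mul hw (integral_powLog_neg_one_le hR hq ht)
          (integral_powLog_nonneg hR ht) (powLog_nonneg hR ht)
    _ = powLog R u (v + (q + 1)) t := by rw [powLog_mul_powLog hR ht, add_zero]
    _ ≤ _ := powLog_le_of_le hR ht htT hu hv (by linarith)

end TimeIntegral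

section E2Bound

variable {p a b R : ℝ}

lemma exists_wfun_mul_integral_le_E2_of_pos (ha : 0 < a) (hR : 1 < R) :
    ∃ C > 0, ∀ T t x, 0 ≤ t → t ≤ T →
      wfun a R x t * ∫ s in (0 : ℝ)..t, powLog R (duhamelExp p a b) (duhamelLogExp p a b) s ≤
        C * E2 p a b R T := by
  rcases lt_trichotomy (a + b) 0 with hab | hab | hab
  · have he : duhamelExp p a b = -(a + b) - 1 := by
      simp [duhamelExp, ha.le, (by linarith : b ≤ 0)]
      ring
    have hq : duhamelLogExp p a b = 0 := by simp [duhamelLogExp, ha.ne', (by linarith : b ≠ 0)]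
    refine ⟨(-(a + b))⁻¹, inv_pos.2 (by linarith), fun T t x ht htT => ?_⟩
    have hE : E2 p a b R T = (T + 2 * R) ^ (-(a + b)) := by
      unfold E2
      split_ifs <;> grind
    rw [he, hq, hE]
    convert wfun_mul_integral_powLog_le_of_neg_one_lt (e := -(a + b) - 1) hR ht htT
      (X := T + 2 * R) (by linarith) (by linarith) le_rfl (wfun_le_of_pos ha) (by linarith)
      (by norm_num) using 2 <;> simp
  · have he : duhamelExp p a b = -1 := by
      simp [duhamelExp, ha.le, (by linarith : b ≤ 0)]
      linarith
    have hq : duhamelLogExp p a b = 0 := by simp [duhamelLogExp, ha.ne', (by linarith : b ≠ 0)]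
    refine ⟨1, one_pos, fun T t x ht htT => ?_⟩
    have hE : E2 p a b R T = log (T + 3 * R) := by
      unfold E2
      split_ifs <;> grind
    rw [he, hq, hE, one_mul]
    simpa using wfun_mul_integral_powLog_neg_one_le hR ht htT (X := T + 2 * R) (by linarith)
      le_rfl (wfun_le_of_pos ha) le_rfl (by norm_num)
  · have he : duhamelExp p a b < -1 := by
      have : -a < min b 0 := lt_min (by linarith) (by linarith)
      simp only [duhamelExp, min_eq_right ha.le, neg_zero, zero_mul]
      linarith
    have hq : 0 ≤ duhamelLogExp p a b := by
      simp only [duhamelLogExp, if_neg ha.ne', zero_mul, zero_add]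
      split_ifs <;> norm_num
    obtain ⟨C, hC⟩ := exists_integral_powLog_le_of_lt_neg_one hR hq he
    refine ⟨max C 1, one_pos.trans_le (le_max_right _ _), fun T t x ht htT => ?_⟩
    have hE : E2 p a b R T = 1 := by
      unfold E2
      split_ifs <;> grind
    simp only [wfun, if_pos ha, one_mul, hE, mul_one]
    exact (hC t ht).trans (le_max_left _ _)

lemma exists_wfun_mul_integral_le_E2_of_eq_zero (hp : 1 < p) (hR : 1 < R) :
    ∃ C > 0, ∀ T t x, 0 ≤ t → t ≤ T →
      wfun 0 R x t * ∫ s in (0 : ℝ)..t, powLog R (duhamelExp p 0 b) (duhamelLogExp p 0 b) s ≤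
        C * E2 p 0 b R T := by
  rcases lt_or_ge b 0 with hb | hb
  · have he : duhamelExp p 0 b = -b - 1 := by
      simp [duhamelExp, hb.le]
      ring
    have hq : duhamelLogExp p 0 b = p := by simp [duhamelLogExp, hb.ne]
    refine ⟨(-b)⁻¹, inv_pos.2 (by linarith), fun T t x ht htT => ?_⟩
    have hE : E2 p 0 b R T = log (T + 3 * R) ^ (p - 1) * (T + R) ^ (-b) := by
      unfold E2
      split_ifs <;> grind
    rw [he, hq, hE]
    convert wfun_mul_integral_powLog_le_of_neg_one_lt (e := -b - 1) (q := p) hR ht htT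
      (X := T + R) (by linarith) (by linarith) (by linarith) (wfun_zero_le hR ht) (by linarith)
      (by linarith) using 1
    ring_nf
  · have he : duhamelExp p 0 b = -1 := by simp [duhamelExp, hb]
    refine ⟨1, one_pos, fun T t x ht htT => ?_⟩
    have hE : E2 p 0 b R T = log (T + 3 * R) ^ duhamelLogExp p 0 b := by
      unfold E2 duhamelLogExp
      split_ifs <;> grind
    rw [he, hE, one_mul]
    have hq : 0 ≤ duhamelLogExp p 0 b := duhamelLogExp_nonneg (by linarith)
    simpa using wfun_mul_integral_powLog_neg_one_le hR ht htT (X := T + 2 * R) (by linarith) hq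
      (wfun_zero_le hR ht) le_rfl (by linarith)

lemma exists_wfun_mul_integral_le_E2_of_neg (ha : a < 0) (hp : 1 < p) (hR : 1 < R) :
    ∃ C > 0, ∀ T t x, 0 ≤ t → t ≤ T →
      wfun a R x t * ∫ s in (0 : ℝ)..t, powLog R (duhamelExp p a b) (duhamelLogExp p a b) s ≤
        C * E2 p a b R T := by
  have he : a + (duhamelExp p a b + 1) = -(p * a) - min b 0 := by
    simp only [duhamelExp, min_eq_left ha.le]
    ring
  have he1 : -1 < duhamelExp p a b := by nlinarith [min_le_right b 0]
  have hq : 0 ≤ duhamelLogExp p a b := duhamelLogExp_nonneg (by linarith)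
  refine ⟨(duhamelExp p a b + 1)⁻¹, inv_pos.2 (by linarith), fun T t x ht htT => ?_⟩
  have hE : E2 p a b R T =
      (T + 2 * R) ^ (a + (duhamelExp p a b + 1)) * log (T + 3 * R) ^ (0 + duhamelLogExp p a b) := by
    rw [he, zero_add, duhamelLogExp, if_neg ha.ne, zero_mul, zero_add]
    rcases lt_trichotomy b 0 with hb | rfl | hb
    · rw [min_eq_left hb.le, if_neg hb.ne, Real.rpow_zero, mul_one]
      unfold E2
      split_ifs <;> grind
    · rw [min_self, sub_zero, if_pos rfl, Real.rpow_one]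
      unfold E2
      split_ifs <;> grind
    · rw [min_eq_right hb.le, sub_zero, if_neg hb.ne', Real.rpow_zero, mul_one]
      unfold E2
      split_ifs <;> grind
  rw [hE]
  exact wfun_mul_integral_powLog_le_of_neg_one_lt hR ht htT (by linarith) he1 hq
    (wfun_le_of_neg ha hR ht) (by rw [he]; nlinarith [min_le_right b 0]) (by linarith)

lemma exists_wfun_mul_integral_le_E2 (hp : 1 < p) (hR : 1 < R) :
    ∃ C > 0, ∀ T t x, 0 ≤ t → t ≤ T →
      wfun a R x t * ∫ s in (0 : ℝ)..t, powLog R (duhamelExp p a b) (duhamelLogExp p a b) s ≤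
        C * E2 p a b R T := by
  rcases lt_trichotomy a 0 with ha | rfl | ha
  · exact exists_wfun_mul_integral_le_E2_of_neg ha hp hR
  · exact exists_wfun_mul_integral_le_E2_of_eq_zero hp hR
  · exact exists_wfun_mul_integral_le_E2_of_pos ha hR

end E2Bound

/-- `M` is any bound of `‖U‖₂ = sup_{ℝ×[0,T]} w(|x|,t)|U(x,t)|`. -/
theorem weighted_apriori_estimate_E2_general (p a b R : ℝ)
    (hp : 1 < p) (hR : 1 < R) :
    ∃ C₃ > 0, ∀ T : ℝ, 0 < T → ∀ U : ℝ → ℝ → ℝ,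
      ContinuousOn (fun q : ℝ × ℝ => U q.1 q.2) (Set.univ ×ˢ Set.Icc 0 T) →
      (∀ x t : ℝ, 0 ≤ t → t ≤ T → t + R < |x| → U x t = 0) →
      ∀ M : ℝ, 0 ≤ M →
      (∀ x t : ℝ, 0 ≤ t → t ≤ T → wfun a R x t * |U x t| ≤ M) →
      ∀ x t : ℝ, 0 ≤ t → t ≤ T →
        wfun a R x t * |duhamel a b (fun y s => |U y s| ^ p) x t|
          ≤ C₃ * M ^ p * E2 p a b R T := by
  obtain ⟨C₁, hC₁, hL⟩ := exists_abs_duhamel_le (a := a) (b := b) hp hR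
  obtain ⟨C₂, hC₂, hE⟩ := exists_wfun_mul_integral_le_E2 (a := a) (b := b) hp hR
  refine ⟨C₁ * C₂, mul_pos hC₁ hC₂, fun T _ U _ hsupp M hM hU x t ht htT => ?_⟩
  set I := ∫ s in (0 : ℝ)..t, powLog R (duhamelExp p a b) (duhamelLogExp p a b) s
  calc wfun a R x t * |duhamel a b (fun y s => |U y s| ^ p) x t|
      ≤ wfun a R x t * (C₁ * M ^ p * I) :=
        mul_le_mul_of_nonneg_left (hL U M x t ht (fun y s hs hst => hsupp y s hs (hst.trans htT))
          (fun y s hs hst => hU y s hs (hst.trans htT))) (wfun_pos hR ht).le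
    _ = C₁ * M ^ p * (wfun a R x t * I) := by ring
    _ ≤ C₁ * M ^ p * (C₂ * E2 p a b R T) :=
        mul_le_mul_of_nonneg_left (hE T t x ht htT) (by positivity)
    _ = C₁ * C₂ * M ^ p * E2 p a b R T := by ring

/-- Lemma 4.2 (weighted a priori estimate): `‖L(|U|^p)‖₂ ≤ C₃ ‖U‖₂^p E₂(T)`,
formulated via an arbitrary bound `M` for `‖U‖₂ = sup_{ℝ×[0,T]} w(|x|,t)|U(x,t)|`. -/
theorem weighted_apriori_estimate_E2 (p a b R : ℝ)
    (hp : 1 < p) (hR : 1 < R)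
    (hab : (0 < a + b ∧ 0 < a) ∨ (a = 0 ∧ 0 < b) ∨ (a + b = 0 ∧ 0 < a) ∨
      (a = 0 ∧ b = 0) ∨ (a < 0 ∧ 0 < b) ∨ (a < 0 ∧ b = 0) ∨ (a < 0 ∧ b < 0) ∨
      (a = 0 ∧ b < 0) ∨ (a + b < 0 ∧ 0 < a)) :
    ∃ C₃ > 0, ∀ T : ℝ, 0 < T → ∀ U : ℝ → ℝ → ℝ,
      ContinuousOn (fun q : ℝ × ℝ => U q.1 q.2) (Set.univ ×ˢ Set.Icc 0 T) →
      (∀ x t : ℝ, 0 ≤ t → t ≤ T → t + R < |x| → U x t = 0) →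
      ∀ M : ℝ, 0 ≤ M →
      (∀ x t : ℝ, 0 ≤ t → t ≤ T → wfun a R x t * |U x t| ≤ M) →
      ∀ x t : ℝ, 0 ≤ t → t ≤ T →
        wfun a R x t * |duhamel a b (fun y s => |U y s| ^ p) x t|
          ≤ C₃ * M ^ p * E2 p a b R T :=
  weighted_apriori_estimate_E2_general p a b R hp hR
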